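/- arXiv:1301.2527 — 2 statements merged into one kernel-verified Lean document; each statement's English description precedes it below -/
import Mathlib

section
/- For every real number a ≠ 0 and every λ > 0, the Laplace transform of the first-passage density f_a satisfies ∫₀^∞ e^{−λt} · (|a| / √(2πt³)) · exp(−a²/(2t)) dt = exp(−|a| · √(2λ)). -/
/-!
Substituting `t = s²` turns the integrand into
`exp (-|a| √(2λ)) · (2/√π) · (c/s²) exp (-(b s - c/s)²)` with `b = √λ`, `c = |a|/√2`: the
constant is what is left after completing the square in the exponent. The map `u = b s - c/s`
sends `(0, ∞)` increasingly onto `ℝ` with `du = (b + c/s²) ds`, and the involution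
`s ↦ c/(b s)` negates `u` while exchanging the weights `b ds` and `(c/s²) ds`. Hence for every
even integrable `f` the integral of `(c/s²) f (b s - c/s)` over `(0, ∞)` is half of `∫ f`
(Cauchy–Schlömilch), which is `√π / 2` for the Gaussian.
-/

open MeasureTheory Real Set

section CauchySchlomilch

variable {E : Type*} [NormedAddCommGroup E] [NormedSpace ℝ E] {b c : ℝ}

lemma hasDerivAt_mul_sub_div (b c : ℝ) {s : ℝ} (hs : s ≠ 0) :
    HasDerivAt (fun s => b * s - c / s) (b + c / s ^ 2) s := by
  have := ((hasDerivAt_id s).const_mul b).fun_sub ((hasDerivAt_inv hs).const_mul c)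
  simpa [div_eq_mul_inv, sub_eq_add_neg] using this

lemma strictMonoOn_mul_sub_div (hb : 0 < b) (hc : 0 ≤ c) :
    StrictMonoOn (fun s => b * s - c / s) (Ioi 0) := by
  intro s hs t _ hst
  have : c / t ≤ c / s := div_le_div_of_nonneg_left hc hs hst.le
  dsimp only
  nlinarith

lemma image_mul_sub_div_Ioi (hb : 0 < b) (hc : 0 < c) :
    (fun s => b * s - c / s) '' Ioi 0 = univ := by
  refine eq_univ_of_forall fun u => ?_
  -- the positive root of `b s² - u s - c = 0`
  set D := √(u ^ 2 + 4 * b * c)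
  have hD : D ^ 2 = u ^ 2 + 4 * b * c := sq_sqrt (by positivity)
  have hDu : -u < D := by nlinarith [sqrt_nonneg (u ^ 2 + 4 * b * c), mul_pos hb hc]
  refine ⟨(u + D) / (2 * b), div_pos (by linarith : 0 < u + D) (by positivity), ?_⟩
  have : u + D ≠ 0 := by linarith
  field_simp
  linear_combination hD

lemma mul_sub_div_comp_div_mul_inv (hb : b ≠ 0) (hc : c ≠ 0) {s : ℝ} (hs : s ≠ 0) :
    b * (c / b * s⁻¹) - c / (c / b * s⁻¹) = -(b * s - c / s) := by
  field_simp
  ring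

theorem integral_comp_mul_sub_div (hb : 0 < b) (hc : 0 < c) (f : ℝ → E) :
    ∫ s in Ioi 0, (b + c / s ^ 2) • f (b * s - c / s) = ∫ u, f u := by
  have := integral_image_eq_integral_abs_deriv_smul measurableSet_Ioi
    (fun s hs => (hasDerivAt_mul_sub_div b c (ne_of_gt hs)).hasDerivWithinAt)
    (strictMonoOn_mul_sub_div hb hc.le).injOn f
  rw [image_mul_sub_div_Ioi hb hc, Measure.restrict_univ] at this
  rw [this]
  refine setIntegral_congr_fun measurableSet_Ioi fun s _ => ?_
  rw [abs_of_pos (by positivity)]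

theorem integrableOn_comp_mul_sub_div (hb : 0 < b) (hc : 0 < c) {f : ℝ → E}
    (hf : Integrable f) :
    IntegrableOn (fun s => (b + c / s ^ 2) • f (b * s - c / s)) (Ioi 0) := by
  have hf' : IntegrableOn f ((fun s => b * s - c / s) '' Ioi 0) := by
    rwa [image_mul_sub_div_Ioi hb hc, integrableOn_univ]
  rw [integrableOn_image_iff_integrableOn_abs_deriv_smul measurableSet_Ioi
    (fun s hs => (hasDerivAt_mul_sub_div b c (ne_of_gt hs)).hasDerivWithinAt)
    (strictMonoOn_mul_sub_div hb hc.le).injOn] at hf'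
  refine hf'.congr_fun (fun s (hs : 0 < s) => ?_) measurableSet_Ioi
  dsimp only
  rw [abs_of_pos (by positivity)]

theorem integral_smul_comp_mul_sub_div_of_even (hb : 0 < b) (hc : 0 < c) {f : ℝ → E}
    (hf : f.Even) :
    ∫ s in Ioi 0, b • f (b * s - c / s) = ∫ s in Ioi 0, (c / s ^ 2) • f (b * s - c / s) := by
  set ψ : ℝ → ℝ := fun s => c / b * s⁻¹
  have hψ_maps : MapsTo ψ (Ioi 0) (Ioi 0) := fun s (hs : 0 < s) => by
    simp only [ψ, mem_Ioi]; positivity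
  have hψ_inv : InvOn ψ ψ (Ioi 0) (Ioi 0) := by
    have h : LeftInvOn ψ ψ (Ioi 0) := fun s (hs : 0 < s) => by
      change c / b * (c / b * s⁻¹)⁻¹ = s
      field_simp
    exact ⟨h, h⟩
  have hψ_bij := hψ_inv.bijOn hψ_maps hψ_maps
  have hψ' : ∀ s ∈ Ioi (0 : ℝ), HasDerivWithinAt ψ (c / b * -(s ^ 2)⁻¹) (Ioi 0) s :=
    fun s (hs : 0 < s) => ((hasDerivAt_inv hs.ne').const_mul (c / b)).hasDerivWithinAt
  conv_lhs => rw [← hψ_bij.image_eq,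
    integral_image_eq_integral_abs_deriv_smul measurableSet_Ioi hψ' hψ_bij.injOn]
  refine setIntegral_congr_fun measurableSet_Ioi fun s (hs : 0 < s) => ?_
  simp only [ψ]
  rw [mul_sub_div_comp_div_mul_inv hb.ne' hc.ne' hs.ne', hf, smul_smul, mul_neg, abs_neg,
    abs_of_pos (by positivity)]
  congr 1
  field_simp

theorem integral_div_sq_smul_comp_mul_sub_div_of_even (hb : 0 < b) (hc : 0 < c) {f : ℝ → E}
    (hf : f.Even) (hfi : Integrable f) :
    ∫ s in Ioi 0, (c / s ^ 2) • f (b * s - c / s) = (1 / 2 : ℝ) • ∫ u, f u := by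
  have hF := integrableOn_comp_mul_sub_div hb hc hfi
  have hB : IntegrableOn (fun s => (c / s ^ 2) • f (b * s - c / s)) (Ioi 0) := by
    refine IntegrableOn.congr_fun (hF.bdd_smul 1 (φ := fun s => c / (b * s ^ 2 + c)) ?_ ?_)
      (fun s (hs : 0 < s) => ?_) measurableSet_Ioi
    · exact (by fun_prop : Measurable fun s : ℝ => c / (b * s ^ 2 + c)).aestronglyMeasurable
    · filter_upwards with s
      rw [norm_div, Real.norm_of_nonneg hc.le, Real.norm_of_nonneg (by positivity),
        div_le_one (by positivity)]
      nlinarith [sq_nonneg s]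
    · change (c / (b * s ^ 2 + c)) • (b + c / s ^ 2) • f (b * s - c / s) = _
      rw [smul_smul]
      congr 1
      field_simp
  have hA : IntegrableOn (fun s => b • f (b * s - c / s)) (Ioi 0) :=
    (hF.sub hB).congr_fun (fun s _ => by simp [add_smul]) measurableSet_Ioi
  have h := integral_comp_mul_sub_div hb hc f
  simp_rw [add_smul] at h
  rw [integral_add hA hB, integral_smul_comp_mul_sub_div_of_even hb hc hf] at h
  rw [← h, ← two_smul ℝ, smul_smul]
  norm_num

end CauchySchlomilch

lemma integral_div_sq_mul_exp_neg_sq_mul_sub_div {b c : ℝ} (hb : 0 < b) (hc : 0 < c) :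
    ∫ s in Ioi 0, c / s ^ 2 * exp (-(b * s - c / s) ^ 2) = √π / 2 := by
  have h := integral_div_sq_smul_comp_mul_sub_div_of_even hb hc (f := fun u => exp (-u ^ 2))
    (fun u => by simp) (by simpa using integrable_exp_neg_mul_sq one_pos)
  have hgauss : ∫ u, exp (-u ^ 2) = √π := by simpa using integral_gaussian 1
  simp only [smul_eq_mul] at h
  rw [h, hgauss]
  ring

lemma firstPassage_integrand_comp_sq (a : ℝ) {l s : ℝ} (hl : 0 ≤ l) (hs : 0 < s) :
    2 * s * (exp (-l * s ^ 2) * (|a| / √(2 * π * (s ^ 2) ^ 3) * exp (-a ^ 2 / (2 * s ^ 2)))) =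
      2 / √π * exp (-|a| * √(2 * l)) * (|a| / √2 / s ^ 2 * exp (-(√l * s - |a| / √2 / s) ^ 2)) := by
  have h2 : √2 ^ 2 = 2 := sq_sqrt zero_le_two
  have hl' : √l ^ 2 = l := sq_sqrt hl
  have hden : √(2 * π * (s ^ 2) ^ 3) = √2 * √π * s ^ 3 := by
    rw [show 2 * π * (s ^ 2) ^ 3 = 2 * π * (s ^ 3) ^ 2 by ring, sqrt_mul (by positivity),
      sqrt_sq (by positivity), sqrt_mul zero_le_two]
  have hexp : -l * s ^ 2 + -a ^ 2 / (2 * s ^ 2) =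
      -|a| * √(2 * l) + -(√l * s - |a| / √2 / s) ^ 2 := by
    rw [sqrt_mul zero_le_two, ← sq_abs a]
    field_simp
    linear_combination (2 * s ^ 2 * |a| * √2 * √l - |a| ^ 2) * h2 + 2 * s ^ 4 * √2 ^ 2 * hl'
  rw [hden, mul_left_comm (exp _), ← exp_add, hexp, exp_add]
  field_simp

/-- Laplace transform of the first-passage density `f_a`:
`∫₀^∞ e^{−λt} (|a| / √(2πt³)) exp(−a²/(2t)) dt = exp(−|a|√(2λ))` for `a ≠ 0`, `λ > 0`. -/
theorem firstPassageDensity_laplaceTransform (a : ℝ) (ha : a ≠ 0) (l : ℝ) (hl : 0 < l) :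
    ∫ t in Set.Ioi (0 : ℝ),
      Real.exp (-l * t) * (|a| / Real.sqrt (2 * Real.pi * t ^ 3) * Real.exp (-a ^ 2 / (2 * t)))
      = Real.exp (-|a| * Real.sqrt (2 * l)) := by
  rw [← integral_comp_rpow_Ioi_of_pos two_pos]
  calc _ = ∫ s in Ioi 0, 2 / √π * exp (-|a| * √(2 * l)) *
        (|a| / √2 / s ^ 2 * exp (-(√l * s - |a| / √2 / s) ^ 2)) := by
        refine setIntegral_congr_fun measurableSet_Ioi fun s (hs : 0 < s) => ?_
        rw [show (2 : ℝ) - 1 = 1 by norm_num, rpow_one, rpow_two, smul_eq_mul]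
        exact firstPassage_integrand_comp_sq a hl.le hs
    _ = _ := by
      rw [integral_const_mul, integral_div_sq_mul_exp_neg_sq_mul_sub_div (sqrt_pos.2 hl)
        (div_pos (abs_pos.2 ha) (sqrt_pos.2 two_pos))]
      field_simp
end

section
/- For every r > 0, the function p_r(t) = (1 / (r·√(2πt))) · (1 − exp(−r²/(2t))) is a probability density on (0, ∞): it is nonnegative and ∫₀^∞ (1 / (r·√(2πt))) · (1 − exp(−r²/(2t))) dt = 1. -/
/-!
The density is the derivative on `(0, ∞)` of the distribution function
`F(t) = 1 - √(2/π) (G(r/√t) - √t (1 - exp(-r²/(2t))) / r)`, where `G(u) = ∫₀ᵘ exp(-x²/2) dx`.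
Since `G(∞) = √(2π)/2` and `√t (1 - exp(-r²/(2t)))` vanishes at both ends, `F` increases from `0`
at `0⁺` to `1` at `∞`, so the fundamental theorem of calculus gives total mass `1`.
-/

open MeasureTheory Real Set Filter Topology

theorem integral_Ioi_of_hasDerivAt_of_nonneg_of_tendsto_nhdsGT {f f' : ℝ → ℝ} {a l₀ l : ℝ}
    (hderiv : ∀ x ∈ Ioi a, HasDerivAt f (f' x) x) (hf' : ∀ x ∈ Ioi a, 0 ≤ f' x)
    (ha : Tendsto f (𝓝[>] a) (𝓝 l₀)) (htop : Tendsto f atTop (𝓝 l)) :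
    ∫ x in Ioi a, f' x = l - l₀ := by
  classical
  -- Mathlib's version asks for continuity at `a`: redefine `f` there as its right limit.
  set g := Function.update f a l₀
  have hfg : ∀ x ∈ Ioi a, g =ᶠ[𝓝 x] f := fun x hx =>
    (eventually_ne_nhds (ne_of_gt hx)).mono fun y hy => Function.update_of_ne hy _ _
  have hcont : ContinuousWithinAt g (Ici a) a := by
    rwa [continuousWithinAt_update_same, Ici_sdiff_left]
  have hgtop : Tendsto g atTop (𝓝 l) :=
    htop.congr' ((eventually_gt_atTop a).mono fun x hx => ((hfg x hx).eq_of_nhds).symm)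
  simpa [g] using integral_Ioi_of_hasDerivAt_of_nonneg hcont
    (fun x hx => (hderiv x hx).congr_of_eventuallyEq (hfg x hx)) hf' hgtop

noncomputable def gaussPartialIntegral (u : ℝ) : ℝ := ∫ x in (0 : ℝ)..u, exp (-x ^ 2 / 2)

lemma hasDerivAt_gaussPartialIntegral (u : ℝ) :
    HasDerivAt gaussPartialIntegral (exp (-u ^ 2 / 2)) u := by
  have hcont : Continuous fun x : ℝ => exp (-x ^ 2 / 2) := by fun_prop
  exact intervalIntegral.integral_hasDerivAt_right (hcont.intervalIntegrable _ _)
    (hcont.stronglyMeasurableAtFilter _ _) hcont.continuousAt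

lemma tendsto_gaussPartialIntegral_atTop :
    Tendsto gaussPartialIntegral atTop (𝓝 (√(2 * π) / 2)) := by
  have hexp : (fun x : ℝ => exp (-x ^ 2 / 2)) = fun x => exp (-(1 / 2) * x ^ 2) := by
    ext x; ring_nf
  have hint : IntegrableOn (fun x : ℝ => exp (-x ^ 2 / 2)) (Ioi 0) := by
    rw [hexp]; exact (integrable_exp_neg_mul_sq (by norm_num)).integrableOn
  have hval : ∫ x in Ioi (0 : ℝ), exp (-x ^ 2 / 2) = √(2 * π) / 2 := by
    rw [hexp, integral_gaussian_Ioi]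
    congr 2
    field_simp
  rw [← hval]
  exact intervalIntegral_tendsto_integral_Ioi 0 hint tendsto_id

lemma tendsto_gaussPartialIntegral_nhds_zero :
    Tendsto gaussPartialIntegral (𝓝 0) (𝓝 0) := by
  simpa [gaussPartialIntegral] using (hasDerivAt_gaussPartialIntegral 0).continuousAt.tendsto

lemma exp_neg_sq_div_le_one (r : ℝ) {t : ℝ} (ht : 0 ≤ t) : exp (-r ^ 2 / (2 * t)) ≤ 1 :=
  exp_le_one_iff.2 <| div_nonpos_of_nonpos_of_nonneg (neg_nonpos.2 (sq_nonneg r)) (by positivity)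

lemma one_sub_exp_neg_sq_div_le (r t : ℝ) : 1 - exp (-r ^ 2 / (2 * t)) ≤ r ^ 2 / (2 * t) := by
  rw [neg_div]
  linarith [one_sub_le_exp_neg (r ^ 2 / (2 * t))]

lemma tendsto_sqrt_nhdsGT_zero : Tendsto (√·) (𝓝[>] 0) (𝓝[>] 0) :=
  tendsto_nhdsWithin_iff.2
    ⟨by simpa using continuous_sqrt.continuousWithinAt.tendsto (s := Ioi (0 : ℝ)) (x := 0),
      eventually_nhdsWithin_of_forall fun _ ht => sqrt_pos.2 ht⟩

lemma tendsto_sqrt_mul_one_sub_exp_nhdsGT_zero (r : ℝ) :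
    Tendsto (fun t => √t * (1 - exp (-r ^ 2 / (2 * t)))) (𝓝[>] 0) (𝓝 0) := by
  refine squeeze_zero' ?_ ?_ (tendsto_sqrt_nhdsGT_zero.mono_right nhdsWithin_le_nhds)
  all_goals filter_upwards [self_mem_nhdsWithin] with t (ht : 0 < t)
  · exact mul_nonneg (sqrt_nonneg t) (sub_nonneg.2 (exp_neg_sq_div_le_one r ht.le))
  · exact mul_le_of_le_one_right (sqrt_nonneg t) (by linarith [exp_pos (-r ^ 2 / (2 * t))])

lemma tendsto_sqrt_mul_one_sub_exp_atTop (r : ℝ) :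
    Tendsto (fun t => √t * (1 - exp (-r ^ 2 / (2 * t)))) atTop (𝓝 0) := by
  have hinv : Tendsto (fun t => r ^ 2 / 2 * (√t)⁻¹) atTop (𝓝 0) := by
    simpa using (tendsto_inv_atTop_zero.comp tendsto_sqrt_atTop).const_mul (r ^ 2 / 2)
  refine squeeze_zero' ?_ ?_ hinv
  all_goals filter_upwards [eventually_gt_atTop 0] with t ht
  · exact mul_nonneg (sqrt_nonneg t) (sub_nonneg.2 (exp_neg_sq_div_le_one r ht.le))
  · calc √t * (1 - exp (-r ^ 2 / (2 * t))) ≤ √t * (r ^ 2 / (2 * t)) :=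
          mul_le_mul_of_nonneg_left (one_sub_exp_neg_sq_div_le r t) (sqrt_nonneg t)
      _ = r ^ 2 / 2 * (√t)⁻¹ := by
          have hs : 0 < √t := sqrt_pos.2 ht
          field_simp
          rw [sq_sqrt ht.le, mul_comm]

lemma tendsto_div_sqrt_nhdsGT_zero {r : ℝ} (hr : 0 < r) :
    Tendsto (fun t => r / √t) (𝓝[>] 0) atTop := by
  simpa only [div_eq_mul_inv, Function.comp_def] using
    (tendsto_inv_nhdsGT_zero.comp tendsto_sqrt_nhdsGT_zero).const_mul_atTop hr

lemma tendsto_div_sqrt_atTop (r : ℝ) : Tendsto (fun t => r / √t) atTop (𝓝 0) := by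
  simpa only [div_eq_mul_inv, Function.comp_def, mul_zero] using
    (tendsto_inv_atTop_zero.comp tendsto_sqrt_atTop).const_mul r

noncomputable def ultimateMinimumTimeDensity (r t : ℝ) : ℝ :=
  1 / (r * √(2 * π * t)) * (1 - exp (-r ^ 2 / (2 * t)))

lemma ultimateMinimumTimeDensity_nonneg {r t : ℝ} (hr : 0 ≤ r) (ht : 0 ≤ t) :
    0 ≤ ultimateMinimumTimeDensity r t :=
  mul_nonneg (by positivity) (sub_nonneg.2 (exp_neg_sq_div_le_one r ht))

noncomputable def ultimateMinimumTimeCDF (r t : ℝ) : ℝ :=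
  1 - 2 / √(2 * π) * (gaussPartialIntegral (r / √t) - √t * (1 - exp (-r ^ 2 / (2 * t))) / r)

lemma hasDerivAt_ultimateMinimumTimeCDF {r t : ℝ} (hr : r ≠ 0) (ht : 0 < t) :
    HasDerivAt (ultimateMinimumTimeCDF r) (ultimateMinimumTimeDensity r t) t := by
  have hsqrt : HasDerivAt (√·) (1 / (2 * √t)) t := hasDerivAt_sqrt ht.ne'
  have hexp : HasDerivAt (fun t => exp (-r ^ 2 / (2 * t)))
      (exp (-r ^ 2 / (2 * t)) * (r ^ 2 / (2 * t ^ 2))) t := by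
    refine ((hasDerivAt_inv ht.ne').const_mul (-r ^ 2 / 2)).exp.congr_deriv ?_
      |>.congr_of_eventuallyEq ?_
    · field_simp
    · filter_upwards with u
      field_simp
  have hdiv : HasDerivAt (fun t => r / √t) (r * (-(1 / (2 * √t)) / √t ^ 2)) t := by
    simpa only [div_eq_mul_inv, Pi.inv_apply] using (hsqrt.inv (sqrt_pos.2 ht).ne').const_mul r
  have hsum := (((hasDerivAt_gaussPartialIntegral _).comp t hdiv).sub
    ((hsqrt.mul (hexp.const_sub 1)).div_const r)).const_mul (2 / √(2 * π)) |>.const_sub 1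
  refine HasDerivAt.congr_deriv (f := ultimateMinimumTimeCDF r) hsum ?_
  have hs : √t ^ 2 = t := sq_sqrt ht.le
  have hs0 : 0 < √t := sqrt_pos.2 ht
  rw [ultimateMinimumTimeDensity, div_pow, hs, sqrt_mul (by positivity : (0 : ℝ) ≤ 2 * π) t]
  generalize √t = s at hs hs0 ⊢
  subst hs
  field_simp
  ring

lemma tendsto_ultimateMinimumTimeCDF_nhdsGT_zero {r : ℝ} (hr : 0 < r) :
    Tendsto (ultimateMinimumTimeCDF r) (𝓝[>] 0) (𝓝 0) := by
  have h := (((tendsto_gaussPartialIntegral_atTop.comp (tendsto_div_sqrt_nhdsGT_zero hr)).sub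
    ((tendsto_sqrt_mul_one_sub_exp_nhdsGT_zero r).div_const r)).const_mul
      (2 / √(2 * π))).const_sub 1
  have hval : 1 - 2 / √(2 * π) * (√(2 * π) / 2 - 0 / r) = 0 := by
    field_simp
    ring
  rwa [hval] at h

lemma tendsto_ultimateMinimumTimeCDF_atTop (r : ℝ) :
    Tendsto (ultimateMinimumTimeCDF r) atTop (𝓝 1) := by
  have h := (((tendsto_gaussPartialIntegral_nhds_zero.comp (tendsto_div_sqrt_atTop r)).sub
    ((tendsto_sqrt_mul_one_sub_exp_atTop r).div_const r)).const_mul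
      (2 / √(2 * π))).const_sub 1
  rwa [zero_div, sub_zero, mul_zero, sub_zero] at h

theorem integral_ultimateMinimumTimeDensity {r : ℝ} (hr : 0 < r) :
    ∫ t in Ioi 0, ultimateMinimumTimeDensity r t = 1 := by
  rw [integral_Ioi_of_hasDerivAt_of_nonneg_of_tendsto_nhdsGT
    (fun t ht => hasDerivAt_ultimateMinimumTimeCDF hr.ne' ht)
    (fun t ht => ultimateMinimumTimeDensity_nonneg hr.le (le_of_lt ht))
    (tendsto_ultimateMinimumTimeCDF_nhdsGT_zero hr) (tendsto_ultimateMinimumTimeCDF_atTop r),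
    sub_zero]

/-- For `r > 0`, the function `p_r(t) = (1/(r√(2πt))) (1 − exp(−r²/(2t)))` is a probability
density on `(0, ∞)`: it is nonnegative there and integrates to `1`. -/
theorem ultimateMinimumTimeDensity_isProbabilityDensity (r : ℝ) (hr : 0 < r) :
    (∀ t ∈ Set.Ioi (0 : ℝ),
      0 ≤ 1 / (r * Real.sqrt (2 * Real.pi * t)) * (1 - Real.exp (-r ^ 2 / (2 * t)))) ∧
    ∫ t in Set.Ioi (0 : ℝ),
      1 / (r * Real.sqrt (2 * Real.pi * t)) * (1 - Real.exp (-r ^ 2 / (2 * t))) = 1 :=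
  ⟨fun _ ht => ultimateMinimumTimeDensity_nonneg hr.le (le_of_lt ht),
    integral_ultimateMinimumTimeDensity hr⟩
end
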